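/- Let $\mathcal{C}$ be an abelian category and $X\colon \mathcal{C}\to\mathcal{C}$ an exact, locally nilpotent functor. For every object $\mathsf{M} = (M, h_{\mathsf{M}})$ of the Eilenberg–Moore category $\mathcal{C}^{T(X)}$ of the free monad, the sequence $0 \to f_! X(M) \xrightarrow{\iota_M - f_!(h_{\mathsf{M}})} f_!(M) \xrightarrow{\varepsilon_{\mathsf{M}}} \mathsf{M} \to 0$ is exact in $\mathcal{C}^{T(X)}$, and becomes split exact after applying the forgetful functor $f^*$. -/

import Mathlib

open CategoryTheory Limits

universe v u

variable {C : Type u} [Category.{v} C]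

/-- The power `X^n` of an endofunctor, with `X^(n+1) = X^n ⋙ X`. -/
def fpow (X : C ⥤ C) : ℕ → (C ⥤ C)
  | 0 => 𝟭 C
  | n + 1 => fpow X n ⋙ X

/-- `X` is locally nilpotent if every object is annihilated by some power of `X`. -/
def LocallyNilpotent (X : C ⥤ C) : Prop :=
  ∀ M : C, ∃ n : ℕ, IsZero ((fpow X n).obj M)

/-- The category `(X ⇓ Id)` of `X`-modules, identified with the Eilenberg–Moore category
of the free monad on `X`. -/
structure XMod (X : C ⥤ C) : Type max u v where
  carrier : C
  str : X.obj carrier ⟶ carrier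

/-- Morphisms of `X`-modules. -/
@[ext]
structure XModHom {X : C ⥤ C} (M N : XMod X) : Type v where
  hom : M.carrier ⟶ N.carrier
  comm : M.str ≫ hom = X.map hom ≫ N.str

instance (X : C ⥤ C) : Category (XMod X) where
  Hom := XModHom
  id M := ⟨𝟙 M.carrier, by simp⟩
  comp f g := ⟨f.hom ≫ g.hom, by
    rw [← Category.assoc, f.comm, Category.assoc, g.comm, ← Category.assoc, ← Functor.map_comp]⟩
  id_comp f := by apply XModHom.ext; simp [CategoryStruct.id, CategoryStruct.comp]
  comp_id f := by apply XModHom.ext; simp [CategoryStruct.id, CategoryStruct.comp]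
  assoc f g h := by apply XModHom.ext; simp [CategoryStruct.comp]

@[simp] lemma XMod.id_hom {X : C ⥤ C} (M : XMod X) : (𝟙 M : XModHom M M).hom = 𝟙 M.carrier := rfl
@[simp] lemma XMod.comp_hom {X : C ⥤ C} {M N P : XMod X} (f : M ⟶ N) (g : N ⟶ P) :
    (f ≫ g).hom = f.hom ≫ g.hom := rfl

/-- `F` is the free `X`-module `f₁(N)` on `N`, encoded via the universal
property of the free–forgetful adjunction `f₁ ⊣ f⋆`. -/
structure IsFreeXModOn (X : C ⥤ C) (F : XMod X) (N : C) where
  unit : N ⟶ F.carrier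
  lift : ∀ (P : XMod X), (N ⟶ P.carrier) → (F ⟶ P)
  fac : ∀ (P : XMod X) (g : N ⟶ P.carrier), unit ≫ (lift P g).hom = g
  uniq : ∀ (P : XMod X) (g : N ⟶ P.carrier) (k : F ⟶ P), unit ≫ k.hom = g → k = lift P g

variable [Abelian C] {X : C ⥤ C} [X.Additive]

instance {M N : XMod X} : Zero (XModHom M N) := ⟨⟨0, by simp⟩⟩
instance {M N : XMod X} : Add (XModHom M N) :=
  ⟨fun f g => ⟨f.hom + g.hom, by
    simp [Preadditive.comp_add, Preadditive.add_comp, f.comm, g.comm]⟩⟩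
instance {M N : XMod X} : Neg (XModHom M N) :=
  ⟨fun f => ⟨-f.hom, by simp [Preadditive.comp_neg, Preadditive.neg_comp, f.comm]⟩⟩

instance {M N : XMod X} : AddCommGroup (XModHom M N) where
  add_assoc f g h := by apply XModHom.ext; exact add_assoc _ _ _
  zero_add f := by apply XModHom.ext; exact zero_add _
  add_zero f := by apply XModHom.ext; exact add_zero _
  add_comm f g := by apply XModHom.ext; exact add_comm _ _
  neg_add_cancel f := by apply XModHom.ext; exact neg_add_cancel _
  nsmul := nsmulRec
  zsmul := zsmulRec

instance : Preadditive (XMod X) where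
  homGroup M N := inferInstanceAs (AddCommGroup (XModHom M N))
  add_comp M N P f g h := by apply XModHom.ext; exact Preadditive.add_comp _ _ _ _ _ _
  comp_add M N P f g h := by apply XModHom.ext; exact Preadditive.comp_add _ _ _ _ _ _

@[simp] lemma XMod.zero_hom (M N : XMod X) : (0 : M ⟶ N).hom = 0 := rfl
@[simp] lemma XMod.add_hom {M N : XMod X} (f g : M ⟶ N) : (f + g).hom = f.hom + g.hom := rfl

/-! The free module `f₁(M)` can be realised as the biproduct `f₁(X M) ⊞ M` whose structure map
is the triangular matrix `[[h, ι], [0, h_M]]`, where `h` is the structure map of `f₁(X M)` and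
`ι` its unit: this twisted biproduct has the universal property of `f₁(M)`, and under the
resulting isomorphism `d` becomes `biprod.inl` and `ε` becomes `biprod.snd`. So the sequence
splits in `C`. A sequence of module maps that splits in `C` is a kernel–cokernel pair of
modules: the lift `k ≫ r` and the descent `s ≫ k` built from the splitting are again module
maps. -/

lemma CategoryTheory.Functor.map_biprod_hom_ext {D E : Type*} [Category D] [Category E]
    [Preadditive D] [Preadditive E] (F : D ⥤ E) [F.Additive] {A B : D} [HasBinaryBiproduct A B]
    {Z : E} {u v : F.obj (A ⊞ B) ⟶ Z} (hl : F.map biprod.inl ≫ u = F.map biprod.inl ≫ v)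
    (hr : F.map biprod.inr ≫ u = F.map biprod.inr ≫ v) : u = v := by
  have expand (w : F.obj (A ⊞ B) ⟶ Z) :
      w = F.map biprod.fst ≫ F.map biprod.inl ≫ w + F.map biprod.snd ≫ F.map biprod.inr ≫ w := by
    simp only [← F.map_comp_assoc, ← Preadditive.add_comp, ← F.map_add, biprod.total, F.map_id,
      Category.id_comp]
  rw [expand u, expand v, hl, hr]

noncomputable def CategoryTheory.ShortComplex.Splitting.ofBiprodIso {D : Type*} [Category D]
    [Preadditive D] {A B N : D} [HasBinaryBiproduct A N] (e : A ⊞ N ≅ B) {f : A ⟶ B} {g : B ⟶ N}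
    (hf : biprod.inl ≫ e.hom = f) (hg : e.inv ≫ biprod.snd = g) (zero : f ≫ g = 0) :
    (ShortComplex.mk f g zero).Splitting :=
  (Splitting.ofHasBinaryBiproduct A N).ofIso
    (ShortComplex.isoMk (Iso.refl _) e (Iso.refl _) (by simp [hf]) (by simp [← hg]))

omit [Abelian C] [X.Additive] in
lemma IsFreeXModOn.hom_ext {F : XMod X} {N : C} (hF : IsFreeXModOn X F N) {P : XMod X}
    {k k' : F ⟶ P} (h : hF.unit ≫ k.hom = hF.unit ≫ k'.hom) : k = k' :=
  (hF.uniq P _ k rfl).trans (hF.uniq P _ k' h.symm).symm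

namespace XMod

@[simps] def forget (X : C ⥤ C) : XMod X ⥤ C where
  obj M := M.carrier
  map f := f.hom

variable {A B N P : XMod X}

section Splitting

variable {d : A ⟶ B} {ε : B ⟶ N} (w : d ≫ ε = 0)
  (σ : (ShortComplex.mk d.hom ε.hom (congrArg XModHom.hom w)).Splitting)

noncomputable def isLimitKernelForkOfSplitting : IsLimit (KernelFork.ofι d w) := by
  have lift_fac {Q : XMod X} (k : Q ⟶ B) (hk : k ≫ ε = 0) : k.hom ≫ σ.r ≫ d.hom = k.hom := by
    have hk : k.hom ≫ ε.hom = 0 := congrArg XModHom.hom hk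
    simp [σ.r_f, Preadditive.comp_sub, reassoc_of% hk]
  have := σ.mono_f
  refine KernelFork.IsLimit.ofι d w (fun {Q} k hk => ⟨k.hom ≫ σ.r, ?_⟩) (fun k hk => ?_)
    (fun k hk m hm => ?_)
  · rw [← cancel_mono d.hom]
    calc (Q.str ≫ k.hom ≫ σ.r) ≫ d.hom = X.map k.hom ≫ B.str := by
          simp only [Category.assoc, lift_fac k hk, k.comm]
      _ = (X.map (k.hom ≫ σ.r) ≫ A.str) ≫ d.hom := by
          rw [Category.assoc, d.comm, ← Functor.map_comp_assoc, Category.assoc, lift_fac k hk]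
  · exact XModHom.ext ((Category.assoc _ _ _).trans (lift_fac k hk))
  · refine XModHom.ext ?_
    calc m.hom = m.hom ≫ d.hom ≫ σ.r := by rw [σ.f_r, Category.comp_id]
      _ = k.hom ≫ σ.r := by rw [← Category.assoc, ← comp_hom, hm]

noncomputable def isColimitCokernelCoforkOfSplitting :
    IsColimit (CokernelCofork.ofπ ε w) := by
  have desc_fac {Q : XMod X} (k : B ⟶ Q) (hk : d ≫ k = 0) : ε.hom ≫ σ.s ≫ k.hom = k.hom := by
    have hk : d.hom ≫ k.hom = 0 := congrArg XModHom.hom hk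
    simp [reassoc_of% σ.g_s, Preadditive.sub_comp, hk]
  refine CokernelCofork.IsColimit.ofπ ε w (fun {Q} k hk => ⟨σ.s ≫ k.hom, ?_⟩)
    (fun k hk => XModHom.ext (desc_fac k hk)) (fun k hk m hm => XModHom.ext ?_)
  · calc N.str ≫ σ.s ≫ k.hom = (X.map σ.s ≫ B.str) ≫ ε.hom ≫ σ.s ≫ k.hom := by
          rw [Category.assoc, reassoc_of% ε.comm, ← Functor.map_comp_assoc, σ.s_g,
            X.map_id, Category.id_comp]
      _ = X.map (σ.s ≫ k.hom) ≫ Q.str := by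
          rw [desc_fac k hk, Category.assoc, k.comm, Functor.map_comp_assoc]
  · calc m.hom = σ.s ≫ ε.hom ≫ m.hom := by rw [σ.s_g_assoc]
      _ = σ.s ≫ k.hom := by rw [← comp_hom, hm]

end Splitting

noncomputable abbrev twistedBiprod (A N : XMod X) (u : X.obj N.carrier ⟶ A.carrier) :
    XMod X where
  carrier := A.carrier ⊞ N.carrier
  str := X.map biprod.fst ≫ A.str ≫ biprod.inl +
    X.map biprod.snd ≫ (u ≫ biprod.inl + N.str ≫ biprod.inr)

namespace twistedBiprod

variable {u : X.obj N.carrier ⟶ A.carrier}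

lemma map_inl_str : X.map biprod.inl ≫ (A.twistedBiprod N u).str = A.str ≫ biprod.inl := by
  simp [twistedBiprod, Preadditive.comp_add, ← Functor.map_comp_assoc]

lemma map_inr_str :
    X.map biprod.inr ≫ (A.twistedBiprod N u).str = u ≫ biprod.inl + N.str ≫ biprod.inr := by
  simp [twistedBiprod, Preadditive.comp_add, ← Functor.map_comp_assoc]

@[simps] noncomputable def inl : A ⟶ A.twistedBiprod N u := ⟨biprod.inl, map_inl_str.symm⟩

@[simps] noncomputable def snd : A.twistedBiprod N u ⟶ N :=
  ⟨biprod.snd, X.map_biprod_hom_ext (by simp [reassoc_of% map_inl_str, ← Functor.map_comp_assoc])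
    (by simp [reassoc_of% map_inr_str, Preadditive.add_comp, ← Functor.map_comp_assoc])⟩

@[simp] lemma inl_snd : (inl : A ⟶ A.twistedBiprod N u) ≫ snd = 0 :=
  XModHom.ext biprod.inl_snd

@[simps] noncomputable def desc (a : A ⟶ P) (g : N.carrier ⟶ P.carrier)
    (h : u ≫ a.hom = X.map g ≫ P.str - N.str ≫ g) : A.twistedBiprod N u ⟶ P :=
  ⟨biprod.desc a.hom g, X.map_biprod_hom_ext
    (by rw [reassoc_of% map_inl_str, biprod.inl_desc, ← X.map_comp_assoc, biprod.inl_desc, a.comm])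
    (by rw [reassoc_of% map_inr_str, ← X.map_comp_assoc, biprod.inr_desc, Preadditive.add_comp,
      Category.assoc, Category.assoc, biprod.inl_desc, biprod.inr_desc, h, sub_add_cancel])⟩

lemma twist_comp_inl_comp (k : A.twistedBiprod N u ⟶ P) :
    u ≫ biprod.inl ≫ k.hom = X.map (biprod.inr ≫ k.hom) ≫ P.str - N.str ≫ biprod.inr ≫ k.hom := by
  rw [eq_sub_iff_add_eq, ← Category.assoc u, ← Category.assoc N.str, ← Preadditive.add_comp,
    ← reassoc_of% map_inr_str, k.comm, Functor.map_comp_assoc]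

lemma hom_ext (hA : IsFreeXModOn X A (X.obj N.carrier)) {k k' : A.twistedBiprod N hA.unit ⟶ P}
    (h : biprod.inr ≫ k.hom = biprod.inr ≫ k'.hom) : k = k' := by
  have hinl : inl ≫ k = inl ≫ k' := hA.hom_ext (by
    rw [comp_hom, comp_hom, inl_hom, twist_comp_inl_comp, twist_comp_inl_comp, h])
  exact XModHom.ext (biprod.hom_ext' _ _ (congrArg XModHom.hom hinl) h)

end twistedBiprod

end XMod

@[simps] noncomputable def IsFreeXModOn.twistedBiprodIso {N F A : XMod X}
    (hF : IsFreeXModOn X F N.carrier) (hA : IsFreeXModOn X A (X.obj N.carrier)) (d : A ⟶ F)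
    (hd : hA.unit ≫ d.hom = X.map hF.unit ≫ F.str - N.str ≫ hF.unit) :
    A.twistedBiprod N hA.unit ≅ F where
  hom := XMod.twistedBiprod.desc d hF.unit hd
  inv := hF.lift _ biprod.inr
  hom_inv_id := XMod.twistedBiprod.hom_ext hA (by simp [hF.fac])
  inv_hom_id := hF.hom_ext (by simp [reassoc_of% hF.fac])

theorem standard_resolution_exact_and_objectwise_split_general
    (M : XMod X)
    (FM FXM : XMod X)
    (hFM : IsFreeXModOn X FM M.carrier) (hFXM : IsFreeXModOn X FXM (X.obj M.carrier))
    (d : FXM ⟶ FM) (ε : FM ⟶ M)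
    (hd : hFXM.unit ≫ d.hom = X.map hFM.unit ≫ FM.str - M.str ≫ hFM.unit)
    (hε : hFM.unit ≫ ε.hom = 𝟙 M.carrier) :
    ∃ w : d ≫ ε = 0,
      Nonempty (IsLimit (KernelFork.ofι d w)) ∧
      Nonempty (IsColimit (CokernelCofork.ofπ ε w)) ∧
      Nonempty ((ShortComplex.mk d.hom ε.hom (congrArg XModHom.hom w)).Splitting) := by
  let e := hFM.twistedBiprodIso hFXM d hd
  have inl_e : XMod.twistedBiprod.inl ≫ e.hom = d := XModHom.ext (biprod.inl_desc _ _)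
  have e_snd : e.inv ≫ XMod.twistedBiprod.snd = ε :=
    hFM.hom_ext (by simp [e, hε, reassoc_of% hFM.fac])
  have w : d ≫ ε = 0 := by simp [← inl_e, ← e_snd]
  let σ := ShortComplex.Splitting.ofBiprodIso ((XMod.forget X).mapIso e)
    (congrArg XModHom.hom inl_e) (congrArg XModHom.hom e_snd) (congrArg XModHom.hom w)
  exact ⟨w, ⟨XMod.isLimitKernelForkOfSplitting w σ⟩,
    ⟨XMod.isColimitCokernelCoforkOfSplitting w σ⟩, ⟨σ⟩⟩

/-- Let `C` be abelian and `X` exact and locally nilpotent. For every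
`X`-module `M`, the canonical sequence
`0 ⟶ f₁(X M) ⟶ f₁(M) ⟶ M ⟶ 0`, where the first map is `ι_M - f₁(h_M)` and the second is
the counit `ε_M` (here characterized by their defining equations on generators), is an
exact sequence (a kernel-cokernel pair) in the Eilenberg–Moore category, and it becomes
split exact after applying the forgetful functor. -/
theorem standard_resolution_exact_and_objectwise_split
    [PreservesFiniteLimits X] [PreservesFiniteColimits X]
    (hX : LocallyNilpotent X) (M : XMod X)
    (FM FXM : XMod X)
    (hFM : IsFreeXModOn X FM M.carrier) (hFXM : IsFreeXModOn X FXM (X.obj M.carrier))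
    (d : FXM ⟶ FM) (ε : FM ⟶ M)
    (hd : hFXM.unit ≫ d.hom = X.map hFM.unit ≫ FM.str - M.str ≫ hFM.unit)
    (hε : hFM.unit ≫ ε.hom = 𝟙 M.carrier) :
    ∃ w : d ≫ ε = 0,
      Nonempty (IsLimit (KernelFork.ofι d w)) ∧
      Nonempty (IsColimit (CokernelCofork.ofπ ε w)) ∧
      Nonempty ((ShortComplex.mk d.hom ε.hom (congrArg XModHom.hom w)).Splitting) :=
  standard_resolution_exact_and_objectwise_split_general M FM FXM hFM hFXM d ε hd hε
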